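/- Achievability above and below the QFI thresholds: let p be a supported-below probability distribution on ℤ. (i) If F_max(p) < ∞, then for every λ ≥ 0 with 4λ > F_max(p) one has P_λ ≻_a p. (ii) If F_min(p) > 0, then for every σ with F_min(p) > 4σ ≥ 0 one has p ≻_a P_σ. -/

import Mathlib

/-- Convolution of two sequences on `ℤ`: `(a*b)(n) = ∑_{k∈ℤ} a(k)·b(n−k)`.
For supported-below sequences this `tsum` has finitely many nonzero terms. -/
noncomputable def conv (a b : ℤ → ℝ) : ℤ → ℝ := fun n => ∑' k : ℤ, a k * b (n - k)

/-- A sequence is supported below if it vanishes for all sufficiently negative indices. -/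
def SuppBelow (a : ℤ → ℝ) : Prop := ∃ N : ℤ, ∀ n : ℤ, n < N → a n = 0

/-- A probability distribution on `ℤ`: nonnegative with total sum 1. -/
def IsProbDist (p : ℤ → ℝ) : Prop := (∀ n : ℤ, 0 ≤ p n) ∧ HasSum p 1

/-- `qt` is the reciprocal sequence `q̃` of `q`, relative to `nstar = n_*(q)`,
the least index where `q` is positive: `q̃` vanishes below `−n_*(q)` and
`(q̃*q)(n) = δ_{n,0}` for all `n`. -/
def IsRecip (q qt : ℤ → ℝ) (nstar : ℤ) : Prop :=
  IsLeast {n : ℤ | 0 < q n} nstar ∧ (∀ n : ℤ, n < -nstar → qt n = 0) ∧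
  (∀ n : ℤ, conv qt q n = if n = 0 then (1 : ℝ) else 0)

/-- The generalized Poisson sequence `P_λ : ℤ → ℝ`,
`P_λ(n) = e^{−λ}·λ^n/n!` for `n ≥ 0` and `P_λ(n) = 0` for `n < 0`. -/
noncomputable def poisson (lam : ℝ) : ℤ → ℝ :=
  fun n => if 0 ≤ n then Real.exp (-lam) * lam ^ n.toNat / (Nat.factorial n.toNat : ℝ) else 0

/-- The max-QFI `F_max(p) = inf{4λ | λ ≥ 0, P_λ ≻_a p} ∈ [0,∞]` (with
`inf ∅ = ∞`).  Since `P_λ ≻_a p` means `(P_λ * p̃)(n) ≥ 0` for all `n`, it is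
expressed through the reciprocal sequence `pt = p̃` of `p`. -/
noncomputable def Fmax (pt : ℤ → ℝ) : ENNReal :=
  sInf {x : ENNReal | ∃ lam : ℝ, 0 ≤ lam ∧
    (∀ n : ℤ, 0 ≤ conv (poisson lam) pt n) ∧ x = ENNReal.ofReal (4 * lam)}

/-- The min-QFI `F_min(p) = sup{4λ | λ ≥ 0, p ≻_a P_λ} ∈ [0,∞]`.  Since
`P̃_λ = P_{−λ}`, the condition `p ≻_a P_λ` reads `(p * P_{−λ})(n) ≥ 0`. -/
noncomputable def Fmin (p : ℤ → ℝ) : ENNReal :=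
  sSup {x : ENNReal | ∃ lam : ℝ, 0 ≤ lam ∧
    (∀ n : ℤ, 0 ≤ conv p (poisson (-lam)) n) ∧ x = ENNReal.ofReal (4 * lam)}

/-!
Poisson sequences form a convolution semigroup, `P_x * P_y = P_{x+y}`, and `P_x ≥ 0` for `x ≥ 0`.
Hence, for a supported-below `a`, nonnegativity of `a * P_μ` propagates to `a * P_λ = P_{λ-μ} * (a * P_μ)`
for every `λ ≥ μ`. Applied to `a = p̃` this shows that `{λ | P_λ ≻_a p}` is upward closed, and applied
to `a = p` with negative parameters that `{σ | p ≻_a P_σ}` is downward closed; beating the infimum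
(resp. supremum) by a witness `μ` therefore suffices.
-/

lemma poisson_of_neg (c : ℝ) {m : ℤ} (h : m < 0) : poisson c m = 0 := by
  simp [poisson, not_le.mpr h]

lemma poisson_natCast (c : ℝ) (N : ℕ) :
    poisson c N = Real.exp (-c) * c ^ N / N.factorial := by
  simp [poisson]

lemma poisson_nonneg {c : ℝ} (hc : 0 ≤ c) (m : ℤ) : 0 ≤ poisson c m := by
  unfold poisson
  split_ifs <;> positivity

lemma conv_comm (a b : ℤ → ℝ) : conv a b = conv b a := by
  funext n
  rw [conv, conv, ← (Equiv.subLeft n).tsum_eq]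
  simp [mul_comm]

lemma conv_eq_sum_Icc {a b : ℤ → ℝ} {A : ℤ} (ha : ∀ m < A, a m = 0) (hb : ∀ m < 0, b m = 0)
    (n : ℤ) : conv a b n = ∑ k ∈ Finset.Icc A n, a k * b (n - k) := by
  refine tsum_eq_sum fun k hk => ?_
  rw [Finset.mem_Icc, not_and_or, not_le, not_le] at hk
  rcases hk with hk | hk
  · rw [ha k hk, zero_mul]
  · rw [hb (n - k) (by omega), mul_zero]

/-- Associativity of convolution, `a * (b * c) = b * (a * c)`, written out for `b` and `c`
supported on `ℕ`. -/
lemma conv_conv_eq_sum {a b c : ℤ → ℝ} {A : ℤ} (ha : ∀ m < A, a m = 0)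
    (hb : ∀ m < 0, b m = 0) (hc : ∀ m < 0, c m = 0) (n : ℤ) :
    conv a (conv b c) n = ∑ j ∈ Finset.Icc 0 (n - A), b j * conv a c (n - j) := by
  have hbc : ∀ m < 0, conv b c m = 0 := fun m hm => by
    rw [conv_eq_sum_Icc hb hc, Finset.Icc_eq_empty (by omega), Finset.sum_empty]
  calc conv a (conv b c) n
      = ∑ k ∈ Finset.Icc A n, ∑ j ∈ Finset.Icc 0 (n - A), a k * (b j * c (n - k - j)) := by
        rw [conv_eq_sum_Icc ha hbc]
        refine Finset.sum_congr rfl fun k hk => ?_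
        rw [Finset.mem_Icc] at hk
        rw [conv_eq_sum_Icc hb hc, Finset.mul_sum]
        refine Finset.sum_subset (Finset.Icc_subset_Icc_right (by omega)) fun j hj hj' => ?_
        simp only [Finset.mem_Icc, not_and_or, not_le] at hj hj'
        rw [hc _ (by omega), mul_zero, mul_zero]
    _ = ∑ j ∈ Finset.Icc 0 (n - A), b j * ∑ k ∈ Finset.Icc A n, a k * c (n - j - k) := by
        rw [Finset.sum_comm]
        refine Finset.sum_congr rfl fun j _ => ?_
        rw [Finset.mul_sum]
        exact Finset.sum_congr rfl fun k _ => by rw [sub_right_comm]; ring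
    _ = ∑ j ∈ Finset.Icc 0 (n - A), b j * conv a c (n - j) := by
        refine Finset.sum_congr rfl fun j hj => ?_
        rw [Finset.mem_Icc] at hj
        rw [conv_eq_sum_Icc ha hc, ← Finset.sum_subset (Finset.Icc_subset_Icc_right
          (by omega : n - j ≤ n))]
        intro k hk hk'
        simp only [Finset.mem_Icc, not_and_or, not_le] at hk hk'
        rw [hc _ (by omega), mul_zero]

lemma conv_poisson (x y : ℝ) : conv (poisson x) (poisson y) = poisson (x + y) := by
  funext n
  rw [conv_eq_sum_Icc (fun _ => poisson_of_neg x) (fun _ => poisson_of_neg y)]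
  rcases lt_or_ge n 0 with hn | hn
  · rw [Finset.Icc_eq_empty (by omega), Finset.sum_empty, poisson_of_neg _ hn]
  lift n to ℕ using hn with N
  rw [Int.Icc_eq_finset_map, Finset.sum_map, poisson_natCast, add_pow, Finset.mul_sum,
    Finset.sum_div]
  simp only [sub_zero, Function.Embedding.trans_apply, Nat.castEmbedding_apply,
    addLeftEmbedding_apply, zero_add]
  rw [show (N + 1 : ℤ).toNat = N + 1 by omega]
  refine Finset.sum_congr rfl fun j hj => ?_
  have hjN : j ≤ N := Nat.lt_succ_iff.mp (Finset.mem_range.mp hj)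
  rw [show (N : ℤ) - j = ((N - j : ℕ) : ℤ) by omega, poisson_natCast, poisson_natCast,
    Nat.cast_choose ℝ hjN, neg_add, Real.exp_add]
  field_simp

lemma conv_poisson_nonneg_of_le {a : ℤ → ℝ} {A : ℤ} (ha : ∀ m < A, a m = 0) {x y : ℝ}
    (hxy : y ≤ x) (hy : ∀ n, 0 ≤ conv a (poisson y) n) (n : ℤ) :
    0 ≤ conv a (poisson x) n := by
  rw [show x = (x - y) + y by ring, ← conv_poisson,
    conv_conv_eq_sum ha (fun _ => poisson_of_neg _) (fun _ => poisson_of_neg _)]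
  exact Finset.sum_nonneg fun j _ => mul_nonneg (poisson_nonneg (by linarith) j) (hy _)

theorem qfi_achievability_general (p pt : ℤ → ℝ) (np : ℤ)
    (hpb : SuppBelow p)
    (hpt : IsRecip p pt np) :
    (Fmax pt ≠ ⊤ →
      ∀ lam : ℝ, 0 ≤ lam → Fmax pt < ENNReal.ofReal (4 * lam) →
        ∀ n : ℤ, 0 ≤ conv (poisson lam) pt n) ∧
    (0 < Fmin p →
      ∀ sig : ℝ, 0 ≤ sig → ENNReal.ofReal (4 * sig) < Fmin p →
        ∀ n : ℤ, 0 ≤ conv p (poisson (-sig)) n) := by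
  constructor
  · intro _ lam hlam hlt n
    obtain ⟨_, ⟨mu, -, hmu, rfl⟩, hmu_lt⟩ := sInf_lt_iff.mp hlt
    have hle : mu ≤ lam := by
      have := (ENNReal.ofReal_le_ofReal_iff (by positivity)).mp hmu_lt.le
      linarith
    rw [conv_comm] at hmu ⊢
    exact conv_poisson_nonneg_of_le hpt.2.1 hle hmu n
  · intro _ sig _ hlt n
    obtain ⟨_, ⟨mu, hmu0, hmu, rfl⟩, hmu_lt⟩ := lt_sSup_iff.mp hlt
    have hle : sig ≤ mu := by
      have := (ENNReal.ofReal_le_ofReal_iff (by positivity)).mp hmu_lt.le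
      linarith
    obtain ⟨N, hN⟩ := hpb
    exact conv_poisson_nonneg_of_le hN (neg_le_neg hle) hmu n

/-- achievability above and below the QFI thresholds for a
supported-below probability distribution `p`:
(i) if `F_max(p) < ∞`, then every `λ ≥ 0` with `4λ > F_max(p)` satisfies
`P_λ ≻_a p`; (ii) if `F_min(p) > 0`, then every `σ` with `F_min(p) > 4σ ≥ 0`
satisfies `p ≻_a P_σ`. -/
theorem qfi_achievability (p pt : ℤ → ℝ) (np : ℤ)
    (hp : IsProbDist p) (hpb : SuppBelow p)
    (hpt : IsRecip p pt np) :
    (Fmax pt ≠ ⊤ →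
      ∀ lam : ℝ, 0 ≤ lam → Fmax pt < ENNReal.ofReal (4 * lam) →
        ∀ n : ℤ, 0 ≤ conv (poisson lam) pt n) ∧
    (0 < Fmin p →
      ∀ sig : ℝ, 0 ≤ sig → ENNReal.ofReal (4 * sig) < Fmin p →
        ∀ n : ℤ, 0 ≤ conv p (poisson (-sig)) n) :=
  qfi_achievability_general p pt np hpb hpt
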